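/- Let I be a subinterval of [0,1), let K be the smallest interval in 𝐊 containing I, and set J := K^m. There exists a constant C(p) > 0, depending only on p and independent of k, of I, and of the choices of the intervals I(J'), such that: (a) if I ∩ J = ∅, then ⟨w_k⟩_I ≤ ⟨w_k⟩_{I(J)} and ⟨σ_k⟩_I ≤ ⟨σ_k⟩_{I(J)}; (b) if I intersects J but does not intersect I(J), then ⟨w_k⟩_I ≤ C(p)⟨w_k⟩_K and ⟨σ_k⟩_I ≤ C(p)⟨σ_k⟩_K; (c) if I intersects both J and I(J), then ⟨w_k⟩_I ≤ C(p)⟨w_k⟩_{I(J)} and ⟨σ_k⟩_I ≤ C(p)·max(|I ∩ I(J)|/|I| , 3^{−k})·⟨σ_k⟩_{I(J)} ≤ C(p)·(|I(J)|/|I|)·⟨σ_k⟩_{I(J)}. -/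

import Mathlib

/-!
Both weights are of the form `u_a = Σ_ℓ a^{ℓ+1} 1_{E_ℓ}` with `E_ℓ = ⋃_{P ∈ 𝐊_ℓ} I(P^m)`:
`w_k` for `a = c = 3^k/(3^{k-1}+1)` and `σ_k` for `a = c^{1-p} ≤ 1`. The sets `E_ℓ` are disjoint,
and for `K ∈ 𝐊ᵢ` the set `K ∩ E_{i+n}` has measure `3^{-n}|I(K^m)|`, so
`⟨u_a⟩_K = a^{i+1} 3^{-k}/(1 - a/3)`, which is `c^i` for `a = c`.
In `K \ K^m` the weight lives only on `I(K^m)`, where it equals `a^{i+1}`. If `I` meets the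
support of `u_a` inside `K^m`, minimality of `K` forces `|I| ≥ 3^{-k}|K|/4`, so `I ∩ K^m` is
covered by children of `K` of total length at most `9|I|`, each of average `a⟨u_a⟩_K`. Hence
`⟨u_a⟩_I ≤ 9a⟨u_a⟩_K + a^{i+1}|I ∩ I(K^m)|/|I|`, and the three cases follow.
-/

open MeasureTheory Set Filter

noncomputable section

namespace RTpaper

/-- The half-open interval `[a, b)` represented by the pair `(a, b)`. -/
def ivSet (I : ℝ × ℝ) : Set ℝ := Set.Ico I.1 I.2

/-- The length of the interval represented by `I`. -/
def len (I : ℝ × ℝ) : ℝ := I.2 - I.1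

/-- The middle triadic child of an interval. -/
def mid (I : ℝ × ℝ) : ℝ × ℝ := (I.1 + (I.2 - I.1) / 3, I.2 - (I.2 - I.1) / 3)

/-- The families `𝐊ᵢ` of the Reguera–Thiele construction. -/
def Kfam (k : ℕ) : ℕ → Set (ℝ × ℝ)
  | 0 => {((0 : ℝ), (1 : ℝ))}
  | (i + 1) =>
      {I | ∃ K ∈ Kfam k i, ∃ j : ℕ, j < 3 ^ (k - 1) ∧
        I = ((mid K).1 + (j : ℝ) * ((3 : ℝ) ^ (1 - (k : ℤ)) * len (mid K)),
             (mid K).1 + ((j : ℝ) + 1) * ((3 : ℝ) ^ (1 - (k : ℤ)) * len (mid K)))}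

/-- The families `𝐉ᵢ` (of interest for `i ≥ 1`). -/
def Jfam (k i : ℕ) : Set (ℝ × ℝ) := {J | ∃ K ∈ Kfam k (i - 1), J = mid K}

/-- The family `𝐊 = ⋃ᵢ 𝐊ᵢ`. -/
def KK (k : ℕ) : Set (ℝ × ℝ) := ⋃ i, Kfam k i

/-- The family `𝐉 = ⋃_{i ≥ 1} 𝐉ᵢ`. -/
def JJ (k : ℕ) : Set (ℝ × ℝ) := ⋃ i, Jfam k (i + 1)

/-- The chosen triadic interval `I(J)` adjacent to `J` of length `3^{1-k}|J|`, encoded by a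
choice function `ch` deciding, for each `J`, whether `I(J)` lies to the right (`true`) or to
the left (`false`) of `J`. -/
def IJ (k : ℕ) (ch : ℝ × ℝ → Bool) (J : ℝ × ℝ) : ℝ × ℝ :=
  if ch J then (J.2, J.2 + (3 : ℝ) ^ (1 - (k : ℤ)) * len J)
  else (J.1 - (3 : ℝ) ^ (1 - (k : ℤ)) * len J, J.1)

/-- The weight `w_k = Σ_{i ≥ 1} Σ_{J ∈ 𝐉ᵢ} (3^k/(3^{k-1}+1))^i · 1_{I(J)}`. -/
def wgt (k : ℕ) (ch : ℝ × ℝ → Bool) (x : ℝ) : ℝ :=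
  ∑' i : ℕ, ∑' J : ↥(Jfam k (i + 1)),
    Set.indicator (ivSet (IJ k ch (J : ℝ × ℝ)))
      (fun _ => ((3 : ℝ) ^ k / ((3 : ℝ) ^ (k - 1) + 1)) ^ (i + 1)) x

/-- The weight `σ_k = w_k^{1-p}` on `{w_k > 0}`, and `0` elsewhere. -/
def sgm (p : ℝ) (k : ℕ) (ch : ℝ × ℝ → Bool) (x : ℝ) : ℝ :=
  if 0 < wgt k ch x then wgt k ch x ^ (1 - p) else 0

/-- `u(I) = ∫_I u`. -/
def mass (u : ℝ → ℝ) (I : ℝ × ℝ) : ℝ := ∫ x in ivSet I, u x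

/-- `⟨u⟩_I = u(I)/|I|`. -/
def avg (u : ℝ → ℝ) (I : ℝ × ℝ) : ℝ := mass u I / len I

/-- `ch_𝐊(K)`: the members of `𝐊_{i+1}` contained in `K ∈ 𝐊ᵢ`. -/
def chK (k : ℕ) (K : ℝ × ℝ) : Set (ℝ × ℝ) :=
  {K' | ∃ i, K ∈ Kfam k i ∧ K' ∈ Kfam k (i + 1) ∧ ivSet K' ⊆ ivSet K}

/-- Triadic intervals of `ℝ`. -/
def IsTriadic (I : ℝ × ℝ) : Prop :=
  ∃ n j : ℤ, I.1 = (j : ℝ) * (3 : ℝ) ^ (-n) ∧ I.2 = ((j : ℝ) + 1) * (3 : ℝ) ^ (-n)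

/-- Maximal members of `S` strictly contained in `R`. -/
def maxIn (S : Set (ℝ × ℝ)) (R : ℝ × ℝ) : Set (ℝ × ℝ) :=
  {Q | Q ∈ S ∧ ivSet Q ⊂ ivSet R ∧
    ∀ Q' ∈ S, ivSet Q ⊆ ivSet Q' → ivSet Q' ⊂ ivSet R → ivSet Q' = ivSet Q}

/-- Martingale `ε`-sparse families of (half-open) intervals. -/
def MSparse (ε : ℝ) (S : Set (ℝ × ℝ)) : Prop :=
  S.Countable ∧ (∀ I ∈ S, I.1 < I.2) ∧
    (∀ I ∈ S, ∀ J ∈ S, ivSet I ⊆ ivSet J ∨ ivSet J ⊆ ivSet I ∨ ivSet I ∩ ivSet J = ∅) ∧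
    ∀ R ∈ S, (∑' Q : ↥(maxIn S R), len (Q : ℝ × ℝ)) ≤ ε * len R

/-- `Σ_{I ∈ F} ⟨u⟩_I^q · ⟨v⟩_I · |I|`. -/
def sumTest (q : ℝ) (u v : ℝ → ℝ) (F : Set (ℝ × ℝ)) : ℝ :=
  ∑' I : ↥F, avg u (I : ℝ × ℝ) ^ q * avg v (I : ℝ × ℝ) * len (I : ℝ × ℝ)

open scoped ENNReal

variable {k : ℕ}

section Scalars

/-- The ratio `|K'|/|K|` for `K' ∈ ch_𝐊(K)`. -/
def rho (k : ℕ) : ℝ := (3 : ℝ) ^ (-(k : ℤ))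

/-- The base `c` of the values `c^i` taken by `w_k`. -/
def cst (k : ℕ) : ℝ := (3 : ℝ) ^ k / ((3 : ℝ) ^ (k - 1) + 1)

lemma rho_pos : 0 < rho k := by unfold rho; positivity

lemma three_zpow_one_sub : (3 : ℝ) ^ (1 - (k : ℤ)) = 3 * rho k := by
  rw [rho, sub_eq_add_neg, zpow_add₀ three_ne_zero, zpow_one]

lemma three_pow_mul_rho : (3 : ℝ) ^ k * rho k = 1 := by
  rw [rho, zpow_neg, zpow_natCast, mul_inv_cancel₀ (by positivity)]

lemma three_pow_eq_three_mul (hk : 1 ≤ k) : (3 : ℝ) ^ k = 3 * 3 ^ (k - 1) := by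
  rw [← pow_succ']; congr 1; omega

lemma three_pow_pred_mul_rho (hk : 1 ≤ k) : (3 : ℝ) ^ (k - 1) * rho k = 1 / 3 := by
  linarith [three_pow_eq_three_mul hk ▸ three_pow_mul_rho (k := k)]

lemma rho_le_one_third (hk : 1 ≤ k) : rho k ≤ 1 / 3 := by
  rw [← three_pow_pred_mul_rho hk]
  exact le_mul_of_one_le_left rho_pos.le (one_le_pow₀ (by norm_num))

lemma rho_le_one_twelfth (hk : 3 ≤ k) : rho k ≤ 1 / 12 := by
  have h27 : (27 : ℝ) ≤ 3 ^ k := by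
    calc (27 : ℝ) = 3 ^ 3 := by norm_num
      _ ≤ 3 ^ k := pow_le_pow_right₀ (by norm_num) hk
  rw [rho, zpow_neg, zpow_natCast]
  exact (inv_le_comm₀ (by positivity) (by norm_num)).mpr (by linarith)

lemma cst_pos : 0 < cst k := by unfold cst; positivity

lemma one_le_cst (hk : 1 ≤ k) : 1 ≤ cst k := by
  rw [cst, le_div_iff₀ (by positivity), three_pow_eq_three_mul hk]
  linarith [one_le_pow₀ (M₀ := ℝ) (a := 3) (n := k - 1) (by norm_num)]

lemma cst_lt_three : cst k < 3 := by
  rw [cst, div_lt_iff₀ (by positivity)]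
  rcases Nat.eq_zero_or_pos k with rfl | hk
  · norm_num
  · linarith [three_pow_eq_three_mul hk]

/-- The identity that makes `⟨w_k⟩_K = c^i` exact for `K ∈ 𝐊ᵢ`. -/
lemma cst_mul_rho (hk : 1 ≤ k) : cst k * rho k = 1 - cst k / 3 := by
  have hc : cst k * ((3 : ℝ) ^ (k - 1) + 1) = 3 ^ k := by rw [cst]; field_simp
  linear_combination rho k * hc + three_pow_mul_rho - cst k * three_pow_pred_mul_rho hk

end Scalars

section Geometry

lemma measurableSet_ivSet (I : ℝ × ℝ) : MeasurableSet (ivSet I) := measurableSet_Ico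

lemma volume_ivSet (I : ℝ × ℝ) : volume (ivSet I) = ENNReal.ofReal (len I) := Real.volume_Ico

lemma mid_fst (K : ℝ × ℝ) : (mid K).1 = K.1 + len K / 3 := rfl

lemma mid_snd (K : ℝ × ℝ) : (mid K).2 = K.2 - len K / 3 := rfl

lemma len_mid (K : ℝ × ℝ) : len (mid K) = len K / 3 := by simp only [len, mid]; ring

lemma mid_subset {K : ℝ × ℝ} (hK : 0 ≤ len K) : ivSet (mid K) ⊆ ivSet K :=
  Ico_subset_Ico (by rw [mid_fst]; linarith) (by rw [mid_snd]; linarith)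

/-- The `j`-th member of `ch_𝐊(K)`, counted from the left. -/
def child (k : ℕ) (K : ℝ × ℝ) (j : ℕ) : ℝ × ℝ :=
  ((mid K).1 + (j : ℝ) * ((3 : ℝ) ^ (1 - (k : ℤ)) * len (mid K)),
   (mid K).1 + ((j : ℝ) + 1) * ((3 : ℝ) ^ (1 - (k : ℤ)) * len (mid K)))

lemma mem_Kfam_succ {i : ℕ} {K' : ℝ × ℝ} :
    K' ∈ Kfam k (i + 1) ↔ ∃ K ∈ Kfam k i, ∃ j < 3 ^ (k - 1), K' = child k K j := Iff.rfl

lemma child_mem_Kfam {i : ℕ} {K : ℝ × ℝ} (hK : K ∈ Kfam k i) {j : ℕ} (hj : j < 3 ^ (k - 1)) :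
    child k K j ∈ Kfam k (i + 1) := ⟨K, hK, j, hj, rfl⟩

lemma child_fst (K : ℝ × ℝ) (j : ℕ) : (child k K j).1 = (mid K).1 + j * (rho k * len K) := by
  simp only [child, three_zpow_one_sub, len_mid]; ring

lemma child_snd (K : ℝ × ℝ) (j : ℕ) :
    (child k K j).2 = (mid K).1 + (j + 1) * (rho k * len K) := by
  simp only [child, three_zpow_one_sub, len_mid]; ring

lemma len_child (K : ℝ × ℝ) (j : ℕ) : len (child k K j) = rho k * len K := by
  rw [len, child_fst, child_snd]; ring

lemma child_subset_mid (hk : 1 ≤ k) {K : ℝ × ℝ} (hK : 0 ≤ len K) {j : ℕ}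
    (hj : j < 3 ^ (k - 1)) : ivSet (child k K j) ⊆ ivSet (mid K) := by
  have hj' : (j : ℝ) + 1 ≤ 3 ^ (k - 1) := by exact_mod_cast hj
  have hρK : 0 ≤ rho k * len K := mul_nonneg rho_pos.le hK
  have hend : (3 : ℝ) ^ (k - 1) * (rho k * len K) = len K / 3 := by
    rw [← mul_assoc, three_pow_pred_mul_rho hk]; ring
  refine Ico_subset_Ico ?_ ?_
  · rw [child_fst]; nlinarith [(Nat.cast_nonneg j : (0 : ℝ) ≤ j)]
  · have hlen : len K = K.2 - K.1 := rfl
    rw [child_snd, mid_snd, mid_fst]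
    linarith [mul_le_mul_of_nonneg_right hj' hρK]

lemma child_subset (hk : 1 ≤ k) {K : ℝ × ℝ} (hK : 0 ≤ len K) {j : ℕ}
    (hj : j < 3 ^ (k - 1)) : ivSet (child k K j) ⊆ ivSet K :=
  (child_subset_mid hk hK hj).trans (mid_subset hK)

lemma disjoint_child {K : ℝ × ℝ} (hK : 0 ≤ len K) {j j' : ℕ} (hne : j ≠ j') :
    Disjoint (ivSet (child k K j)) (ivSet (child k K j')) := by
  wlog hlt : j < j' generalizing j j'
  · exact (this hne.symm (lt_of_le_of_ne (not_lt.mp hlt) hne.symm)).symm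
  have hlt' : (j : ℝ) + 1 ≤ j' := by exact_mod_cast hlt
  rw [Set.disjoint_left]
  rintro x ⟨-, hx⟩ ⟨hx', -⟩
  rw [child_snd] at hx
  rw [child_fst] at hx'
  nlinarith [mul_le_mul_of_nonneg_right hlt' (mul_nonneg (rho_pos (k := k)).le hK)]

lemma biUnion_range_Ico_add_mul (a d : ℝ) (hd : 0 ≤ d) (n : ℕ) :
    ⋃ j ∈ Finset.range n, Ico (a + j * d) (a + (j + 1) * d) = Ico a (a + n * d) := by
  induction n with
  | zero => simp
  | succ n ih =>
    rw [Finset.range_add_one, Finset.set_biUnion_insert, ih, union_comm,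
      Ico_union_Ico_eq_Ico (by nlinarith [(Nat.cast_nonneg n : (0 : ℝ) ≤ n)]) (by linarith)]
    push_cast
    ring_nf

lemma iUnion_child (hk : 1 ≤ k) {K : ℝ × ℝ} (hK : 0 ≤ len K) :
    ⋃ j ∈ Finset.range (3 ^ (k - 1)), ivSet (child k K j) = ivSet (mid K) := by
  have hend : (mid K).1 + ((3 ^ (k - 1) : ℕ) : ℝ) * (rho k * len K) = (mid K).2 := by
    rw [Nat.cast_pow, Nat.cast_ofNat, ← mul_assoc, three_pow_pred_mul_rho hk, mid_fst, mid_snd,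
      len]
    ring
  simp only [ivSet, child_fst, child_snd]
  rw [biUnion_range_Ico_add_mul _ _ (mul_nonneg rho_pos.le hK), hend]

end Geometry

section Generations

lemma len_of_mem_Kfam {i : ℕ} {K : ℝ × ℝ} (hK : K ∈ Kfam k i) : len K = rho k ^ i := by
  induction i generalizing K with
  | zero => rw [show K = (0, 1) from hK]; simp [len]
  | succ i ih =>
    obtain ⟨P, hP, j, -, rfl⟩ := mem_Kfam_succ.mp hK
    rw [len_child, ih hP, pow_succ']

lemma len_pos_of_mem_Kfam {i : ℕ} {K : ℝ × ℝ} (hK : K ∈ Kfam k i) : 0 < len K := by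
  rw [len_of_mem_Kfam hK]; exact pow_pos rho_pos i

lemma Kfam_eq_of_mem (hk : 1 ≤ k) {i : ℕ} {K K' : ℝ × ℝ} (hK : K ∈ Kfam k i)
    (hK' : K' ∈ Kfam k i) {x : ℝ} (hx : x ∈ ivSet K) (hx' : x ∈ ivSet K') : K = K' := by
  induction i generalizing K K' with
  | zero => rw [show K = (0, 1) from hK, show K' = (0, 1) from hK']
  | succ i ih =>
    obtain ⟨P, hP, j, hj, rfl⟩ := mem_Kfam_succ.mp hK
    obtain ⟨P', hP', j', hj', rfl⟩ := mem_Kfam_succ.mp hK'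
    obtain rfl : P = P' := ih hP hP' (child_subset hk (len_pos_of_mem_Kfam hP).le hj hx)
      (child_subset hk (len_pos_of_mem_Kfam hP').le hj' hx')
    by_contra hne
    have hjj : j ≠ j' := fun h => hne (h ▸ rfl)
    exact (disjoint_child (len_pos_of_mem_Kfam hP).le hjj).notMem_of_mem_left hx hx'

lemma exists_Kfam_superset (hk : 1 ≤ k) {m : ℕ} {M : ℝ × ℝ} (hM : M ∈ Kfam k m) {i : ℕ}
    (hi : i ≤ m) : ∃ A ∈ Kfam k i, ivSet M ⊆ ivSet A := by
  induction m generalizing M with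
  | zero => exact ⟨M, Nat.le_zero.mp hi ▸ hM, subset_rfl⟩
  | succ m ih =>
    rcases hi.eq_or_lt with rfl | hlt
    · exact ⟨M, hM, subset_rfl⟩
    obtain ⟨P, hP, j, hj, rfl⟩ := mem_Kfam_succ.mp hM
    obtain ⟨A, hA, hPA⟩ := ih hP (Nat.lt_succ_iff.mp hlt)
    exact ⟨A, hA, (child_subset hk (len_pos_of_mem_Kfam hP).le hj).trans hPA⟩

lemma mem_mid_of_mem_Kfam_of_lt (hk : 1 ≤ k) {i m : ℕ} (him : i < m) {K M : ℝ × ℝ}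
    (hK : K ∈ Kfam k i) (hM : M ∈ Kfam k m) {x : ℝ} (hxK : x ∈ ivSet K) (hxM : x ∈ ivSet M) :
    x ∈ ivSet (mid K) := by
  obtain ⟨A, hA, hMA⟩ := exists_Kfam_superset hk hM (Nat.succ_le_of_lt him)
  obtain ⟨Q, hQ, j, hj, rfl⟩ := mem_Kfam_succ.mp hA
  have hxQ := child_subset_mid hk (len_pos_of_mem_Kfam hQ).le hj (hMA hxM)
  rwa [Kfam_eq_of_mem hk hK hQ hxK (mid_subset (len_pos_of_mem_Kfam hQ).le hxQ)]

lemma Kfam_finite (i : ℕ) : (Kfam k i).Finite := by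
  induction i with
  | zero => exact finite_singleton _
  | succ i ih =>
    refine (ih.biUnion fun K _ => (finite_Iio (3 ^ (k - 1))).image (child k K)).subset ?_
    rintro K' ⟨P, hP, j, hj, rfl⟩
    exact mem_biUnion hP ⟨j, hj, rfl⟩

end Generations

section AdjacentIntervals

variable {ch : ℝ × ℝ → Bool}

lemma IJ_mid_eq (K : ℝ × ℝ) : IJ k ch (mid K) =
    if ch (mid K) then ((mid K).2, (mid K).2 + rho k * len K)
    else ((mid K).1 - rho k * len K, (mid K).1) := by
  unfold IJ
  rw [three_zpow_one_sub, len_mid, show 3 * rho k * (len K / 3) = rho k * len K by ring]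

lemma len_IJ_mid (K : ℝ × ℝ) : len (IJ k ch (mid K)) = rho k * len K := by
  rw [IJ_mid_eq]
  split_ifs <;> simp only [len] <;> ring

lemma IJ_mid_subset_Ico {K : ℝ × ℝ} (hK : 0 ≤ len K) : ivSet (IJ k ch (mid K)) ⊆
    Ico ((mid K).1 - rho k * len K) ((mid K).2 + rho k * len K) := by
  have hρK := mul_nonneg (rho_pos (k := k)).le hK
  have hmid : (mid K).1 ≤ (mid K).2 := by
    have hlen : len K = K.2 - K.1 := rfl
    rw [mid_fst, mid_snd]; linarith
  rw [IJ_mid_eq]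
  split_ifs <;> exact Ico_subset_Ico (by linarith) (by linarith)

lemma IJ_mid_subset (hk : 1 ≤ k) {K : ℝ × ℝ} (hK : 0 ≤ len K) :
    ivSet (IJ k ch (mid K)) ⊆ ivSet K := by
  have hρK : rho k * len K ≤ len K / 3 := by nlinarith [rho_le_one_third hk]
  refine (IJ_mid_subset_Ico hK).trans (Ico_subset_Ico ?_ ?_)
  · rw [mid_fst]; linarith
  · rw [mid_snd]; linarith

lemma disjoint_IJ_mid (K : ℝ × ℝ) : Disjoint (ivSet (IJ k ch (mid K))) (ivSet (mid K)) := by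
  rw [IJ_mid_eq]
  split_ifs
  · exact Ico_disjoint_Ico_same.symm
  · exact Ico_disjoint_Ico_same

variable (k ch) in
/-- The support `⋃_{J ∈ 𝐉_{ℓ+1}} I(J)` of the `ℓ`-th term of the series defining `w_k`. -/
def levelSet (ℓ : ℕ) : Set ℝ := ⋃ P ∈ Kfam k ℓ, ivSet (IJ k ch (mid P))

lemma measurableSet_levelSet (ℓ : ℕ) : MeasurableSet (levelSet k ch ℓ) :=
  (Kfam_finite ℓ).measurableSet_biUnion fun _ _ => measurableSet_ivSet _

lemma mem_levelSet {ℓ : ℕ} {x : ℝ} :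
    x ∈ levelSet k ch ℓ ↔ ∃ P ∈ Kfam k ℓ, x ∈ ivSet (IJ k ch (mid P)) := by
  simp only [levelSet, mem_iUnion, exists_prop]

lemma le_of_mem_levelSet (hk : 1 ≤ k) {i ℓ : ℕ} {K : ℝ × ℝ} (hK : K ∈ Kfam k i) {x : ℝ}
    (hxK : x ∈ ivSet K) (hx : x ∈ levelSet k ch ℓ) : i ≤ ℓ := by
  obtain ⟨P, hP, hxP⟩ := mem_levelSet.mp hx
  by_contra! hℓi
  exact (disjoint_IJ_mid P).notMem_of_mem_left hxP (mem_mid_of_mem_Kfam_of_lt hk hℓi hP hK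
    (IJ_mid_subset hk (len_pos_of_mem_Kfam hP).le hxP) hxK)

lemma mem_mid_of_mem_levelSet (hk : 1 ≤ k) {i ℓ : ℕ} (hiℓ : i < ℓ) {K : ℝ × ℝ}
    (hK : K ∈ Kfam k i) {x : ℝ} (hxK : x ∈ ivSet K) (hx : x ∈ levelSet k ch ℓ) :
    x ∈ ivSet (mid K) := by
  obtain ⟨P, hP, hxP⟩ := mem_levelSet.mp hx
  exact mem_mid_of_mem_Kfam_of_lt hk hiℓ hK hP hxK
    (IJ_mid_subset hk (len_pos_of_mem_Kfam hP).le hxP)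

lemma inter_levelSet_self (hk : 1 ≤ k) {i : ℕ} {K : ℝ × ℝ} (hK : K ∈ Kfam k i) :
    ivSet K ∩ levelSet k ch i = ivSet (IJ k ch (mid K)) := by
  refine Subset.antisymm ?_ fun x hx =>
    ⟨IJ_mid_subset hk (len_pos_of_mem_Kfam hK).le hx, mem_levelSet.mpr ⟨K, hK, hx⟩⟩
  rintro x ⟨hxK, hx⟩
  obtain ⟨P, hP, hxP⟩ := mem_levelSet.mp hx
  rwa [Kfam_eq_of_mem hk hK hP hxK (IJ_mid_subset hk (len_pos_of_mem_Kfam hP).le hxP)]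

lemma disjoint_levelSet (hk : 1 ≤ k) {ℓ ℓ' : ℕ} (hne : ℓ ≠ ℓ') :
    Disjoint (levelSet k ch ℓ) (levelSet k ch ℓ') := by
  wlog hlt : ℓ < ℓ' generalizing ℓ ℓ'
  · exact (this hne.symm (lt_of_le_of_ne (not_lt.mp hlt) hne.symm)).symm
  refine Set.disjoint_left.mpr fun x hx hx' => ?_
  obtain ⟨P, hP, hxP⟩ := mem_levelSet.mp hx
  exact (disjoint_IJ_mid P).notMem_of_mem_left hxP (mem_mid_of_mem_levelSet hk hlt hP
    (IJ_mid_subset hk (len_pos_of_mem_Kfam hP).le hxP) hx')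

lemma diff_mid_inter_levelSet (hk : 1 ≤ k) {i ℓ : ℕ} {K : ℝ × ℝ} (hK : K ∈ Kfam k i)
    {S : Set ℝ} (hS : S ⊆ ivSet K) :
    (S \ ivSet (mid K)) ∩ levelSet k ch ℓ =
      if ℓ = i then S ∩ ivSet (IJ k ch (mid K)) else ∅ := by
  split_ifs with hℓ
  · subst hℓ
    ext x
    refine ⟨fun ⟨⟨hxS, _⟩, hx⟩ => ⟨hxS, ?_⟩, fun ⟨hxS, hx⟩ => ⟨⟨hxS, ?_⟩, ?_⟩⟩
    · rw [← inter_levelSet_self hk hK]; exact ⟨hS hxS, hx⟩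
    · exact (disjoint_IJ_mid K).notMem_of_mem_left hx
    · exact mem_levelSet.mpr ⟨K, hK, hx⟩
  · refine eq_empty_of_forall_notMem fun x ⟨⟨hxS, hxm⟩, hx⟩ => hxm ?_
    exact mem_mid_of_mem_levelSet hk
      (lt_of_le_of_ne (le_of_mem_levelSet hk hK (hS hxS) hx) (Ne.symm hℓ)) hK (hS hxS) hx

lemma volume_inter_levelSet (hk : 1 ≤ k) {i : ℕ} {K : ℝ × ℝ} (hK : K ∈ Kfam k i) (n : ℕ) :
    volume (ivSet K ∩ levelSet k ch (i + n)) = ENNReal.ofReal (rho k * len K / 3 ^ n) := by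
  induction n generalizing i K with
  | zero => rw [add_zero, inter_levelSet_self hk hK, volume_ivSet, len_IJ_mid, pow_zero, div_one]
  | succ n ih =>
    have hK0 := (len_pos_of_mem_Kfam hK).le
    have hsplit : ivSet K ∩ levelSet k ch (i + (n + 1)) =
        ⋃ j ∈ Finset.range (3 ^ (k - 1)), ivSet (child k K j) ∩ levelSet k ch (i + 1 + n) := by
      rw [← iUnion₂_inter, iUnion_child hk hK0, add_right_comm, add_assoc]
      refine Subset.antisymm (fun x ⟨hxK, hx⟩ => ⟨?_, hx⟩)
        (inter_subset_inter_left _ (mid_subset hK0))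
      exact mem_mid_of_mem_levelSet hk (by omega) hK hxK hx
    rw [hsplit, measure_biUnion_finset]
    · rw [Finset.sum_congr rfl fun j hj =>
        (ih (child_mem_Kfam hK (Finset.mem_range.mp hj))).trans (by rw [len_child]),
        Finset.sum_const, Finset.card_range, nsmul_eq_mul, ← ENNReal.ofReal_natCast,
        ← ENNReal.ofReal_mul (Nat.cast_nonneg _)]
      congr 1
      push_cast
      rw [show (3 : ℝ) ^ (k - 1) * (rho k * (rho k * len K) / 3 ^ n) =
        3 ^ (k - 1) * rho k * (rho k * len K) / 3 ^ n by ring, three_pow_pred_mul_rho hk]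
      ring
    · exact fun j _ j' _ hne => ((disjoint_child hK0 hne).mono inter_subset_left inter_subset_left)
    · exact fun j _ => (measurableSet_ivSet _).inter (measurableSet_levelSet _)

lemma margin_of_mem_levelSet (hk : 3 ≤ k) {n ℓ : ℕ} {A : ℝ × ℝ} (hA : A ∈ Kfam k n) {x : ℝ}
    (hxA : x ∈ ivSet A) (hx : x ∈ levelSet k ch ℓ) :
    A.1 + len A / 4 ≤ x ∧ x < A.2 - len A / 4 := by
  have hk1 : 1 ≤ k := by omega
  have hA0 := (len_pos_of_mem_Kfam hA).le
  have hwin : x ∈ Ico ((mid A).1 - rho k * len A) ((mid A).2 + rho k * len A) := by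
    rcases (le_of_mem_levelSet hk1 hA hxA hx).eq_or_lt with rfl | hlt
    · have hxW : x ∈ ivSet A ∩ levelSet k ch n := ⟨hxA, hx⟩
      rw [inter_levelSet_self hk1 hA] at hxW
      exact IJ_mid_subset_Ico hA0 hxW
    · obtain ⟨h1, h2⟩ : (mid A).1 ≤ x ∧ x < (mid A).2 := mem_mid_of_mem_levelSet hk1 hlt hA hxA hx
      have := mul_nonneg (rho_pos (k := k)).le hA0
      exact ⟨by linarith, by linarith⟩
  rw [mid_fst, mid_snd] at hwin
  have : rho k * len A ≤ len A / 12 := by nlinarith [rho_le_one_twelfth hk]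
  exact ⟨by linarith [hwin.1], by linarith [hwin.2]⟩

end AdjacentIntervals

section LevelWeights

variable {ch : ℝ × ℝ → Bool}

variable (k ch) in
/-- Both `w_k` (`a = c`) and `σ_k` (`a = c^{1-p}`) are of this form. -/
def levelWeight (a : ℝ) (x : ℝ) : ℝ :=
  ∑' ℓ : ℕ, (levelSet k ch ℓ).indicator (fun _ => a ^ (ℓ + 1)) x

lemma levelWeight_of_mem (hk : 1 ≤ k) (a : ℝ) {ℓ : ℕ} {x : ℝ} (hx : x ∈ levelSet k ch ℓ) :
    levelWeight k ch a x = a ^ (ℓ + 1) := by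
  rw [levelWeight, tsum_eq_single ℓ fun ℓ' hne =>
    indicator_of_notMem ((disjoint_levelSet hk hne).notMem_of_mem_right hx) _,
    indicator_of_mem hx]

lemma levelWeight_of_forall_notMem (a : ℝ) {x : ℝ} (hx : ∀ ℓ, x ∉ levelSet k ch ℓ) :
    levelWeight k ch a x = 0 := by
  simp [levelWeight, indicator_of_notMem (hx _)]

lemma levelWeight_nonneg {a : ℝ} (ha : 0 ≤ a) (x : ℝ) : 0 ≤ levelWeight k ch a x :=
  tsum_nonneg fun _ => indicator_nonneg (fun _ _ => pow_nonneg ha _) x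

lemma measurable_levelWeight (a : ℝ) : Measurable (levelWeight k ch a) :=
  Measurable.tsum fun ℓ => measurable_const.indicator (measurableSet_levelSet ℓ)

lemma ofReal_levelWeight (hk : 1 ≤ k) (a : ℝ) (x : ℝ) :
    ENNReal.ofReal (levelWeight k ch a x) =
      ∑' ℓ, (levelSet k ch ℓ).indicator (fun _ => ENNReal.ofReal (a ^ (ℓ + 1))) x := by
  by_cases h : ∃ ℓ, x ∈ levelSet k ch ℓ
  · obtain ⟨ℓ, hx⟩ := h
    rw [levelWeight_of_mem hk a hx, tsum_eq_single ℓ fun ℓ' hne =>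
      indicator_of_notMem ((disjoint_levelSet hk hne).notMem_of_mem_right hx) _,
      indicator_of_mem hx]
  · rw [not_exists] at h
    simp [levelWeight_of_forall_notMem a h, indicator_of_notMem (h _)]

lemma setLIntegral_levelWeight (hk : 1 ≤ k) (a : ℝ) (T : Set ℝ) :
    ∫⁻ x in T, ENNReal.ofReal (levelWeight k ch a x) =
      ∑' ℓ, ENNReal.ofReal (a ^ (ℓ + 1)) * volume (T ∩ levelSet k ch ℓ) := by
  simp_rw [ofReal_levelWeight hk]
  rw [lintegral_tsum fun ℓ => (measurable_const.indicator (measurableSet_levelSet ℓ)).aemeasurable]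
  congr 1
  ext ℓ
  rw [lintegral_indicator_const (measurableSet_levelSet ℓ),
    Measure.restrict_apply (measurableSet_levelSet ℓ), inter_comm]

lemma mass_levelWeight {a : ℝ} (ha : 0 ≤ a) (I : ℝ × ℝ) :
    mass (levelWeight k ch a) I =
      (∫⁻ x in ivSet I, ENNReal.ofReal (levelWeight k ch a x)).toReal :=
  integral_eq_lintegral_of_nonneg_ae (ae_of_all _ (levelWeight_nonneg ha))
    (measurable_levelWeight a).aestronglyMeasurable

lemma setLIntegral_levelWeight_diff_mid (hk : 1 ≤ k) (a : ℝ) {i : ℕ} {K : ℝ × ℝ}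
    (hK : K ∈ Kfam k i) {S : Set ℝ} (hS : S ⊆ ivSet K) :
    ∫⁻ x in S \ ivSet (mid K), ENNReal.ofReal (levelWeight k ch a x) =
      ENNReal.ofReal (a ^ (i + 1)) * volume (S ∩ ivSet (IJ k ch (mid K))) := by
  rw [setLIntegral_levelWeight hk a,
    tsum_eq_single i fun ℓ hℓ => by
      rw [diff_mid_inter_levelSet hk hK hS, if_neg hℓ, measure_empty, mul_zero],
    diff_mid_inter_levelSet hk hK hS, if_pos rfl]

lemma setLIntegral_levelWeight_Kfam (hk : 1 ≤ k) {a : ℝ} (ha : 0 ≤ a) (ha3 : a < 3) {i : ℕ}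
    {K : ℝ × ℝ} (hK : K ∈ Kfam k i) :
    ∫⁻ x in ivSet K, ENNReal.ofReal (levelWeight k ch a x) =
      ENNReal.ofReal (a ^ (i + 1) * rho k * len K / (1 - a / 3)) := by
  have hρ := rho_pos (k := k)
  have hK0 := (len_pos_of_mem_Kfam hK).le
  have hterm : ∀ n : ℕ,
      ENNReal.ofReal (a ^ (n + i + 1)) * volume (ivSet K ∩ levelSet k ch (n + i)) =
        ENNReal.ofReal (a ^ (i + 1) * rho k * len K * (a / 3) ^ n) := by
    intro n
    rw [add_comm n i, volume_inter_levelSet hk hK, ← ENNReal.ofReal_mul (by positivity)]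
    congr 1
    rw [div_pow]
    ring
  have hgeom : HasSum (fun n : ℕ => a ^ (i + 1) * rho k * len K * (a / 3) ^ n)
      (a ^ (i + 1) * rho k * len K / (1 - a / 3)) := by
    rw [div_eq_mul_inv]
    exact (hasSum_geometric_of_lt_one (by positivity) (by linarith)).mul_left _
  rw [setLIntegral_levelWeight hk a, ← (add_left_injective i).tsum_eq,
    tsum_congr hterm, ← ENNReal.ofReal_tsum_of_nonneg (fun n => by positivity) hgeom.summable,
    hgeom.tsum_eq]
  intro ℓ hℓ
  have hiℓ : i ≤ ℓ := by
    by_contra! hlt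
    refine Function.mem_support.mp hℓ ?_
    have hempty : ivSet K ∩ levelSet k ch ℓ = ∅ :=
      eq_empty_of_forall_notMem fun x hx => hlt.not_ge (le_of_mem_levelSet hk hK hx.1 hx.2)
    rw [hempty, measure_empty, mul_zero]
  exact ⟨ℓ - i, Nat.sub_add_cancel hiℓ⟩

lemma avg_levelWeight_IJ (hk : 1 ≤ k) {a : ℝ} (ha : 0 ≤ a) {i : ℕ} {K : ℝ × ℝ}
    (hK : K ∈ Kfam k i) : avg (levelWeight k ch a) (IJ k ch (mid K)) = a ^ (i + 1) := by
  have hW := (disjoint_IJ_mid (k := k) (ch := ch) K).sdiff_eq_left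
  have hρK := mul_pos (rho_pos (k := k)) (len_pos_of_mem_Kfam hK)
  rw [avg, mass_levelWeight ha, ← hW, setLIntegral_levelWeight_diff_mid hk a hK
    (IJ_mid_subset hk (len_pos_of_mem_Kfam hK).le), inter_self,
    volume_ivSet, ENNReal.toReal_mul, ENNReal.toReal_ofReal (by positivity),
    ENNReal.toReal_ofReal (len_IJ_mid (k := k) (ch := ch) K ▸ hρK.le), len_IJ_mid,
    mul_div_cancel_right₀ _ hρK.ne']

lemma avg_levelWeight_Kfam (hk : 1 ≤ k) {a : ℝ} (ha : 0 ≤ a) (ha3 : a < 3) {i : ℕ}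
    {K : ℝ × ℝ} (hK : K ∈ Kfam k i) :
    avg (levelWeight k ch a) K = a ^ (i + 1) * rho k / (1 - a / 3) := by
  have hK0 := len_pos_of_mem_Kfam hK
  rw [avg, mass_levelWeight ha, setLIntegral_levelWeight_Kfam hk ha ha3 hK,
    ENNReal.toReal_ofReal (div_nonneg (by have := rho_pos (k := k); positivity) (by linarith))]
  field_simp

end LevelWeights

section LocalEstimates

variable {ch : ℝ × ℝ → Bool}

lemma setLIntegral_inter_mid_le (hk : 1 ≤ k) {K : ℝ × ℝ} (hK : 0 ≤ len K) (f : ℝ → ℝ≥0∞)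
    {γ : ℝ} (hγ : 0 ≤ γ) (hchild : ∀ j < 3 ^ (k - 1),
      ∫⁻ x in ivSet (child k K j), f x ≤ ENNReal.ofReal (γ * (rho k * len K)))
    (I : ℝ × ℝ) :
    ∫⁻ x in ivSet I ∩ ivSet (mid K), f x ≤
      ENNReal.ofReal (γ * (len I + 2 * (rho k * len K))) := by
  set h := rho k * len K
  set S := (Finset.range (3 ^ (k - 1))).filter fun j =>
    I.1 < (child k K j).2 ∧ (child k K j).1 < I.2
  have hdisj : (S : Set ℕ).PairwiseDisjoint fun j => ivSet (child k K j) :=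
    fun j _ j' _ hne => disjoint_child hK hne
  have hcover : ivSet I ∩ ivSet (mid K) ⊆ ⋃ j ∈ S, ivSet (child k K j) := by
    rintro x ⟨hxI, hxm⟩
    rw [← iUnion_child hk hK] at hxm
    obtain ⟨j, hj, hxj⟩ := mem_iUnion₂.mp hxm
    refine mem_biUnion (Finset.mem_filter.mpr ⟨hj, ?_, ?_⟩) hxj
    · exact hxI.1.trans_lt hxj.2
    · exact hxj.1.trans_lt hxI.2
  have hspread : ⋃ j ∈ S, ivSet (child k K j) ⊆ Ico (I.1 - h) (I.2 + h) := by
    refine iUnion₂_subset fun j hj => ?_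
    obtain ⟨-, h1, h2⟩ := Finset.mem_filter.mp hj
    have hlen : (child k K j).2 - (child k K j).1 = h := len_child K j
    exact Ico_subset_Ico (by linarith) (by linarith)
  calc ∫⁻ x in ivSet I ∩ ivSet (mid K), f x
      ≤ ∫⁻ x in ⋃ j ∈ S, ivSet (child k K j), f x := lintegral_mono_set hcover
    _ = ∑ j ∈ S, ∫⁻ x in ivSet (child k K j), f x :=
        lintegral_biUnion_finset hdisj (fun j _ => measurableSet_ivSet _) f
    _ ≤ ∑ j ∈ S, ENNReal.ofReal γ * volume (ivSet (child k K j)) := by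
        refine Finset.sum_le_sum fun j hj => ?_
        rw [volume_ivSet, len_child, ← ENNReal.ofReal_mul hγ]
        exact hchild j (Finset.mem_range.mp (Finset.mem_filter.mp hj).1)
    _ = ENNReal.ofReal γ * volume (⋃ j ∈ S, ivSet (child k K j)) := by
        rw [← Finset.mul_sum, measure_biUnion_finset hdisj fun j _ => measurableSet_ivSet _]
    _ ≤ ENNReal.ofReal γ * volume (Ico (I.1 - h) (I.2 + h)) := by gcongr
    _ = ENNReal.ofReal (γ * (len I + 2 * h)) := by
        rw [Real.volume_Ico, ← ENNReal.ofReal_mul hγ, len]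
        ring_nf

/-- By minimality of `K`, `I` is not inside the child `A` of `K` containing `x`, while `x` is at
distance at least `|A|/4` from the endpoints of `A`. -/
lemma rho_mul_len_le_of_minimal (hk : 3 ≤ k) {i ℓ : ℕ} {K : ℝ × ℝ} (hK : K ∈ Kfam k i)
    {I : ℝ × ℝ} (hmin : ∀ K' ∈ KK k, ivSet I ⊆ ivSet K' → ivSet K ⊆ ivSet K') {x : ℝ}
    (hxI : x ∈ ivSet I) (hxm : x ∈ ivSet (mid K)) (hx : x ∈ levelSet k ch ℓ) :
    rho k * len K ≤ 4 * len I := by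
  have hk1 : 1 ≤ k := by omega
  have hK0 := len_pos_of_mem_Kfam hK
  rw [← iUnion_child hk1 hK0.le] at hxm
  obtain ⟨j, hj, hxA⟩ := mem_iUnion₂.mp hxm
  have hA := child_mem_Kfam hK (Finset.mem_range.mp hj)
  obtain ⟨hm1, hm2⟩ := margin_of_mem_levelSet hk hA hxA hx
  have hIA : ¬ ivSet I ⊆ ivSet (child k K j) := fun hIA => by
    have hKA := hmin _ (mem_iUnion.mpr ⟨i + 1, hA⟩) hIA
    obtain ⟨h1, h2⟩ := (Ico_subset_Ico_iff (by simpa [len] using hK0)).mp hKA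
    have hlenA : len (child k K j) = (child k K j).2 - (child k K j).1 := rfl
    rw [len_child] at hlenA hm1
    have : len K ≤ rho k * len K := by simp only [len] at hlenA ⊢; linarith
    nlinarith [rho_le_one_twelfth hk]
  obtain ⟨y, ⟨hy1, hy2⟩, hyA⟩ := not_subset.mp hIA
  obtain ⟨hx1, hx2⟩ : I.1 ≤ x ∧ x < I.2 := hxI
  rw [len_child] at hm1 hm2
  have hlenI : len I = I.2 - I.1 := rfl
  rcases not_and_or.mp hyA with hy | hy <;> push Not at hy <;> linarith

end LocalEstimates

section LevelWeightEstimates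

variable {ch : ℝ × ℝ → Bool} {a : ℝ} {i : ℕ} {K I : ℝ × ℝ}

lemma toReal_volume_le_len {S : Set ℝ} (hS : S ⊆ ivSet I) (hI : 0 ≤ len I) :
    (volume S).toReal ≤ len I :=
  ENNReal.toReal_le_of_le_ofReal hI ((measure_mono hS).trans (volume_ivSet I).le)

lemma max_le_len_IJ_div (hK : K ∈ Kfam k i) (hI : I.1 < I.2) (hIK : ivSet I ⊆ ivSet K) :
    max ((volume (ivSet I ∩ ivSet (IJ k ch (mid K)))).toReal / len I) (rho k) ≤
      len (IJ k ch (mid K)) / len I := by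
  have hI0 : 0 < len I := sub_pos.mpr hI
  have hK0 := (len_pos_of_mem_Kfam hK).le
  have hIK' : len I ≤ len K := by
    simpa [volume_ivSet, ENNReal.toReal_ofReal hI0.le] using toReal_volume_le_len hIK hK0
  refine max_le (div_le_div_of_nonneg_right ?_ hI0.le) ((le_div_iff₀ hI0).mpr ?_)
  · exact toReal_volume_le_len inter_subset_right
      (len_IJ_mid (ch := ch) K ▸ mul_nonneg rho_pos.le hK0)
  · rw [len_IJ_mid]
    exact mul_le_mul_of_nonneg_left hIK' rho_pos.le

lemma avg_levelWeight_nonneg (ha : 0 ≤ a) (hI : 0 ≤ len I) : 0 ≤ avg (levelWeight k ch a) I :=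
  div_nonneg (mass_levelWeight ha I ▸ ENNReal.toReal_nonneg) hI

lemma setLIntegral_levelWeight_inter_mid_le (hk : 3 ≤ k) (ha : 0 ≤ a) (ha3 : a < 3)
    (hK : K ∈ Kfam k i) (hmin : ∀ K' ∈ KK k, ivSet I ⊆ ivSet K' → ivSet K ⊆ ivSet K') :
    ∫⁻ x in ivSet I ∩ ivSet (mid K), ENNReal.ofReal (levelWeight k ch a x) ≤
      ENNReal.ofReal (9 * a * avg (levelWeight k ch a) K * len I) := by
  have hk1 : 1 ≤ k := by omega
  have hK0 := len_pos_of_mem_Kfam hK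
  have havg := avg_levelWeight_Kfam (ch := ch) hk1 ha ha3 hK
  have havg0 : 0 ≤ avg (levelWeight k ch a) K :=
    avg_levelWeight_nonneg ha hK0.le
  by_cases hmeet : ∃ x ∈ ivSet I ∩ ivSet (mid K), ∃ ℓ, x ∈ levelSet k ch ℓ
  · obtain ⟨x, ⟨hxI, hxm⟩, ℓ, hx⟩ := hmeet
    have hIK := rho_mul_len_le_of_minimal hk hK hmin hxI hxm hx
    refine (setLIntegral_inter_mid_le hk1 hK0.le _ (mul_nonneg ha havg0) (fun j hj => ?_) I).trans
      (ENNReal.ofReal_le_ofReal ?_)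
    · rw [setLIntegral_levelWeight_Kfam hk1 ha ha3 (child_mem_Kfam hK hj), len_child, havg]
      apply le_of_eq
      congr 1
      ring
    · linarith [mul_le_mul_of_nonneg_left hIK (mul_nonneg ha havg0)]
  · push Not at hmeet
    have hzero : ∀ ℓ, ENNReal.ofReal (a ^ (ℓ + 1)) *
        volume (ivSet I ∩ ivSet (mid K) ∩ levelSet k ch ℓ) = 0 := fun ℓ => by
      have hempty : ivSet I ∩ ivSet (mid K) ∩ levelSet k ch ℓ = ∅ :=
        eq_empty_of_forall_notMem fun x hx => hmeet x hx.1 ℓ hx.2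
      rw [hempty, measure_empty, mul_zero]
    rw [setLIntegral_levelWeight hk1, ENNReal.tsum_eq_zero.mpr hzero]
    exact zero_le

lemma avg_levelWeight_le (hk : 3 ≤ k) (ha : 0 ≤ a) (ha3 : a < 3) (hK : K ∈ Kfam k i)
    (hI : I.1 < I.2) (hIK : ivSet I ⊆ ivSet K)
    (hmin : ∀ K' ∈ KK k, ivSet I ⊆ ivSet K' → ivSet K ⊆ ivSet K') :
    avg (levelWeight k ch a) I ≤ 9 * a * avg (levelWeight k ch a) K +
      a ^ (i + 1) * ((volume (ivSet I ∩ ivSet (IJ k ch (mid K)))).toReal / len I) := by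
  have hk1 : 1 ≤ k := by omega
  have hI0 : 0 < len I := sub_pos.mpr hI
  set v := (volume (ivSet I ∩ ivSet (IJ k ch (mid K)))).toReal
  have hv : volume (ivSet I ∩ ivSet (IJ k ch (mid K))) = ENNReal.ofReal v :=
    (ENNReal.ofReal_toReal (measure_ne_top_of_subset inter_subset_left
      (by rw [volume_ivSet]; exact ENNReal.ofReal_ne_top))).symm
  have hmass : mass (levelWeight k ch a) I ≤
      9 * a * avg (levelWeight k ch a) K * len I + a ^ (i + 1) * v := by
    rw [mass_levelWeight ha, ← lintegral_inter_add_sdiff _ _ (measurableSet_ivSet (mid K)),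
      setLIntegral_levelWeight_diff_mid hk1 a hK hIK, hv, ← ENNReal.ofReal_mul (by positivity)]
    have havg0 : 0 ≤ 9 * a * avg (levelWeight k ch a) K * len I := mul_nonneg (mul_nonneg
      (by positivity) (avg_levelWeight_nonneg ha (len_pos_of_mem_Kfam hK).le)) hI0.le
    exact ENNReal.toReal_le_of_le_ofReal (by positivity)
      ((add_le_add (setLIntegral_levelWeight_inter_mid_le hk ha ha3 hK hmin) le_rfl).trans
        (ENNReal.ofReal_add havg0 (by positivity)).ge)
  rw [avg, div_le_iff₀ hI0]
  refine hmass.trans (le_of_eq ?_)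
  field_simp

lemma avg_levelWeight_le_of_inter_mid_eq_empty (hk : 1 ≤ k) (ha : 0 ≤ a) (hK : K ∈ Kfam k i)
    (hI : I.1 < I.2) (hIK : ivSet I ⊆ ivSet K) (hImid : ivSet I ∩ ivSet (mid K) = ∅) :
    avg (levelWeight k ch a) I ≤ avg (levelWeight k ch a) (IJ k ch (mid K)) := by
  have hI0 : 0 < len I := sub_pos.mpr hI
  rw [avg_levelWeight_IJ hk ha hK, avg, div_le_iff₀ hI0, mass_levelWeight ha,
    ← (disjoint_iff_inter_eq_empty.mpr hImid).sdiff_eq_left,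
    setLIntegral_levelWeight_diff_mid hk a hK hIK, ENNReal.toReal_mul,
    ENNReal.toReal_ofReal (by positivity)]
  exact mul_le_mul_of_nonneg_left (toReal_volume_le_len inter_subset_left hI0.le) (by positivity)

lemma avg_levelWeight_le_of_inter_IJ_eq_empty (hk : 3 ≤ k) (ha : 0 ≤ a) (ha3 : a < 3)
    (hK : K ∈ Kfam k i) (hI : I.1 < I.2) (hIK : ivSet I ⊆ ivSet K)
    (hmin : ∀ K' ∈ KK k, ivSet I ⊆ ivSet K' → ivSet K ⊆ ivSet K')
    (hIW : ivSet I ∩ ivSet (IJ k ch (mid K)) = ∅) :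
    avg (levelWeight k ch a) I ≤ 27 * avg (levelWeight k ch a) K := by
  have h := avg_levelWeight_le (ch := ch) hk ha ha3 hK hI hIK hmin
  rw [hIW, measure_empty, ENNReal.toReal_zero, zero_div, mul_zero, add_zero] at h
  exact h.trans (mul_le_mul_of_nonneg_right (by linarith)
    (avg_levelWeight_nonneg ha (len_pos_of_mem_Kfam hK).le))

lemma avg_levelWeight_cst_Kfam (hk : 1 ≤ k) (hK : K ∈ Kfam k i) :
    avg (levelWeight k ch (cst k)) K = cst k ^ i := by
  have h := cst_mul_rho hk
  have h3 : 0 < 1 - cst k / 3 := by linarith [cst_lt_three (k := k)]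
  rw [avg_levelWeight_Kfam hk cst_pos.le cst_lt_three hK, div_eq_iff h3.ne', ← h]
  ring

lemma avg_levelWeight_cst_le (hk : 3 ≤ k) (hK : K ∈ Kfam k i) (hI : I.1 < I.2)
    (hIK : ivSet I ⊆ ivSet K) (hmin : ∀ K' ∈ KK k, ivSet I ⊆ ivSet K' → ivSet K ⊆ ivSet K') :
    avg (levelWeight k ch (cst k)) I ≤ 10 * avg (levelWeight k ch (cst k)) (IJ k ch (mid K)) := by
  have hk1 : 1 ≤ k := by omega
  have h := avg_levelWeight_le (ch := ch) (a := cst k) hk cst_pos.le cst_lt_three hK hI hIK hmin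
  have hI0 : 0 < len I := sub_pos.mpr hI
  have hv := div_le_one_of_le₀ (toReal_volume_le_len (S := ivSet I ∩ ivSet (IJ k ch (mid K)))
    inter_subset_left hI0.le) hI0.le
  rw [avg_levelWeight_cst_Kfam hk1 hK] at h
  rw [avg_levelWeight_IJ hk1 cst_pos.le hK]
  calc _ ≤ _ := h
    _ ≤ 9 * cst k ^ (i + 1) + cst k ^ (i + 1) * 1 :=
        add_le_add (le_of_eq (by ring)) (mul_le_mul_of_nonneg_left hv (pow_pos cst_pos _).le)
    _ = 10 * cst k ^ (i + 1) := by ring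

lemma avg_levelWeight_le_max (hk : 3 ≤ k) (ha : 0 ≤ a) (ha1 : a ≤ 1) (hK : K ∈ Kfam k i)
    (hI : I.1 < I.2) (hIK : ivSet I ⊆ ivSet K)
    (hmin : ∀ K' ∈ KK k, ivSet I ⊆ ivSet K' → ivSet K ⊆ ivSet K') :
    avg (levelWeight k ch a) I ≤
      15 * max ((volume (ivSet I ∩ ivSet (IJ k ch (mid K)))).toReal / len I) (rho k) *
        avg (levelWeight k ch a) (IJ k ch (mid K)) := by
  have hk1 : 1 ≤ k := by omega
  have h := avg_levelWeight_le (ch := ch) hk ha (by linarith) hK hI hIK hmin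
  rw [avg_levelWeight_Kfam hk1 ha (by linarith) hK] at h
  rw [avg_levelWeight_IJ hk1 ha hK]
  set v := (volume (ivSet I ∩ ivSet (IJ k ch (mid K)))).toReal / len I
  have hρ := rho_pos (k := k)
  have hai := pow_nonneg ha (i + 1)
  have hfrac : 9 * a * (a ^ (i + 1) * rho k / (1 - a / 3)) ≤ 14 * rho k * a ^ (i + 1) := by
    rw [mul_div_assoc', div_le_iff₀ (by linarith)]
    nlinarith [mul_nonneg hai hρ.le]
  calc _ ≤ 14 * rho k * a ^ (i + 1) + a ^ (i + 1) * v := by linarith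
    _ ≤ 14 * max v (rho k) * a ^ (i + 1) + a ^ (i + 1) * max v (rho k) := by
        gcongr
        exacts [le_max_right _ _, le_max_left _ _]
    _ = 15 * max v (rho k) * a ^ (i + 1) := by ring

end LevelWeightEstimates

section Weights

variable {ch : ℝ × ℝ → Bool}

lemma mem_Jfam_succ {ℓ : ℕ} {J : ℝ × ℝ} : J ∈ Jfam k (ℓ + 1) ↔ ∃ P ∈ Kfam k ℓ, J = mid P := by
  simp [Jfam]

lemma tsum_Jfam_indicator (hk : 1 ≤ k) (ℓ : ℕ) (f : ℝ → ℝ) (x : ℝ) :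
    ∑' J : ↥(Jfam k (ℓ + 1)), (ivSet (IJ k ch J)).indicator f x =
      (levelSet k ch ℓ).indicator f x := by
  by_cases hx : x ∈ levelSet k ch ℓ
  · obtain ⟨P, hP, hxP⟩ := mem_levelSet.mp hx
    rw [indicator_of_mem hx, tsum_eq_single ⟨mid P, mem_Jfam_succ.mpr ⟨P, hP, rfl⟩⟩,
      indicator_of_mem hxP]
    rintro ⟨J, hJ⟩ hne
    obtain ⟨P', hP', rfl⟩ := mem_Jfam_succ.mp hJ
    refine indicator_of_notMem (fun hxP' => hne ?_) _
    exact Subtype.ext (congrArg mid (Kfam_eq_of_mem hk hP' hP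
      (IJ_mid_subset hk (len_pos_of_mem_Kfam hP').le hxP')
      (IJ_mid_subset hk (len_pos_of_mem_Kfam hP).le hxP)))
  · rw [indicator_of_notMem hx]
    refine (tsum_congr fun J => ?_).trans tsum_zero
    obtain ⟨P, hP, hJ⟩ := mem_Jfam_succ.mp J.2
    rw [hJ]
    exact indicator_of_notMem (fun hxJ => hx (mem_levelSet.mpr ⟨P, hP, hxJ⟩)) _

lemma wgt_eq_levelWeight (hk : 1 ≤ k) : wgt k ch = levelWeight k ch (cst k) := by
  funext x
  exact tsum_congr fun ℓ => tsum_Jfam_indicator hk ℓ _ x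

lemma sgm_eq_levelWeight (hk : 1 ≤ k) (p : ℝ) :
    sgm p k ch = levelWeight k ch (cst k ^ (1 - p)) := by
  funext x
  rw [sgm, wgt_eq_levelWeight hk]
  by_cases h : ∃ ℓ, x ∈ levelSet k ch ℓ
  · obtain ⟨ℓ, hx⟩ := h
    have hc := cst_pos (k := k)
    rw [levelWeight_of_mem hk _ hx, levelWeight_of_mem hk _ hx, if_pos (by positivity),
      ← Real.rpow_natCast_mul hc.le, mul_comm, Real.rpow_mul_natCast hc.le]
  · rw [not_exists] at h
    rw [levelWeight_of_forall_notMem _ h, levelWeight_of_forall_notMem _ h, if_neg (lt_irrefl 0)]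

end Weights

/-- Lemma 3.2 of the paper: estimates of averages of `w_k`, `σ_k` over a general subinterval
`I` of `[0,1)` in terms of the smallest interval `K ∈ 𝐊` containing `I` (with `J := K^m`). -/
theorem statement1 (p : ℝ) (hp : 1 < p) :
    ∃ C : ℝ, 0 < C ∧ ∀ k : ℕ, 3000 < k → ∀ ch : ℝ × ℝ → Bool,
      ∀ I : ℝ × ℝ, 0 ≤ I.1 → I.1 < I.2 → I.2 ≤ 1 →
      ∀ K ∈ KK k, ivSet I ⊆ ivSet K →
        (∀ K' ∈ KK k, ivSet I ⊆ ivSet K' → ivSet K ⊆ ivSet K') →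
        ((ivSet I ∩ ivSet (mid K) = ∅ →
            avg (wgt k ch) I ≤ avg (wgt k ch) (IJ k ch (mid K)) ∧
            avg (sgm p k ch) I ≤ avg (sgm p k ch) (IJ k ch (mid K))) ∧
         ((ivSet I ∩ ivSet (mid K)).Nonempty →
            ivSet I ∩ ivSet (IJ k ch (mid K)) = ∅ →
            avg (wgt k ch) I ≤ C * avg (wgt k ch) K ∧
            avg (sgm p k ch) I ≤ C * avg (sgm p k ch) K) ∧
         ((ivSet I ∩ ivSet (mid K)).Nonempty →
            (ivSet I ∩ ivSet (IJ k ch (mid K))).Nonempty →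
            avg (wgt k ch) I ≤ C * avg (wgt k ch) (IJ k ch (mid K)) ∧
            avg (sgm p k ch) I ≤
              C * max ((volume (ivSet I ∩ ivSet (IJ k ch (mid K)))).toReal / len I)
                    ((3 : ℝ) ^ (-(k : ℤ))) * avg (sgm p k ch) (IJ k ch (mid K)) ∧
            C * max ((volume (ivSet I ∩ ivSet (IJ k ch (mid K)))).toReal / len I)
                  ((3 : ℝ) ^ (-(k : ℤ))) * avg (sgm p k ch) (IJ k ch (mid K)) ≤
              C * (len (IJ k ch (mid K)) / len I) * avg (sgm p k ch) (IJ k ch (mid K)))) := by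
  refine ⟨27, by norm_num, fun k hk ch I _ hI _ K hKK hIK hmin => ?_⟩
  have hk3 : 3 ≤ k := by omega
  have hk1 : 1 ≤ k := by omega
  obtain ⟨i, hK⟩ := mem_iUnion.mp hKK
  have hd0 : 0 ≤ cst k ^ (1 - p) := (Real.rpow_pos_of_pos cst_pos _).le
  have hd1 : cst k ^ (1 - p) ≤ 1 :=
    Real.rpow_le_one_of_one_le_of_nonpos (one_le_cst hk1) (by linarith)
  have hW : ∀ a, 0 ≤ a → 0 ≤ avg (levelWeight k ch a) (IJ k ch (mid K)) := fun a ha =>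
    avg_levelWeight_nonneg ha (len_IJ_mid (k := k) (ch := ch) K ▸
      mul_nonneg rho_pos.le (len_pos_of_mem_Kfam hK).le)
  rw [wgt_eq_levelWeight hk1, sgm_eq_levelWeight hk1]
  refine ⟨fun hImid => ⟨?_, ?_⟩, fun _ hIW => ⟨?_, ?_⟩, fun _ _ => ⟨?_, ?_, ?_⟩⟩
  · exact avg_levelWeight_le_of_inter_mid_eq_empty hk1 cst_pos.le hK hI hIK hImid
  · exact avg_levelWeight_le_of_inter_mid_eq_empty hk1 hd0 hK hI hIK hImid
  · exact avg_levelWeight_le_of_inter_IJ_eq_empty hk3 cst_pos.le cst_lt_three hK hI hIK hmin hIW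
  · exact avg_levelWeight_le_of_inter_IJ_eq_empty hk3 hd0 (by linarith) hK hI hIK hmin hIW
  · exact (avg_levelWeight_cst_le hk3 hK hI hIK hmin).trans
      (mul_le_mul_of_nonneg_right (by norm_num) (hW _ cst_pos.le))
  · refine (avg_levelWeight_le_max hk3 hd0 hd1 hK hI hIK hmin).trans
      (mul_le_mul_of_nonneg_right (mul_le_mul_of_nonneg_right (by norm_num) ?_) (hW _ hd0))
    exact rho_pos.le.trans (le_max_right _ _)
  · exact mul_le_mul_of_nonneg_right (mul_le_mul_of_nonneg_left (max_le_len_IJ_div hK hI hIK)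
      (by norm_num)) (hW _ hd0)

end RTpaper
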